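/- arXiv:2405.04193 — 4 statements merged into one kernel-verified Lean document; each statement's English description precedes it below -/
import Mathlib

section
/- Let q be the uniform distribution on cells, q(i) = 1/r^T for every cell i. Let t be a nonnegative function on cells that is permutation-invariant (t(i∘σ)=t(i)) with ∑_{cells i} t(i)/#A(i) = 1 and t(i) > 0 for all i. Among all positive probability vectors π satisfying the orbit-sum constraints ∑_{j ∈ A(i)} π(j) = t(i) for every cell i, the f-divergence I(π : q) attains its minimum value at the vector π^S given by π^S(i) = t(i)/#A(i), and this minimizer is unique. -/
/-- The orbit `A(i)` of a cell `i : Fin T → Fin r` under the action of the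
symmetric group on `Fin T` permuting coordinates (`σ · i = i ∘ σ`). -/
def cellOrbit (r T : ℕ) (i : Fin T → Fin r) : Finset (Fin T → Fin r) :=
  Finset.univ.filter (fun j => ∃ σ : Equiv.Perm (Fin T), j = i ∘ σ)

lemma mem_cellOrbit_iff {r T : ℕ} {i j : Fin T → Fin r} :
    j ∈ cellOrbit r T i ↔ ∃ σ : Equiv.Perm (Fin T), j = i ∘ σ := by
  simp [cellOrbit]

lemma self_mem_cellOrbit (r T : ℕ) (i : Fin T → Fin r) : i ∈ cellOrbit r T i :=
  mem_cellOrbit_iff.2 ⟨1, rfl⟩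

lemma cellOrbit_eq_of_mem {r T : ℕ} {i j : Fin T → Fin r} (h : j ∈ cellOrbit r T i) :
    cellOrbit r T j = cellOrbit r T i := by
  obtain ⟨σ, rfl⟩ := mem_cellOrbit_iff.1 h
  ext k
  simp only [mem_cellOrbit_iff]
  constructor
  · rintro ⟨τ, rfl⟩
    exact ⟨σ * τ, by ext x; simp [Equiv.Perm.coe_mul, Function.comp]⟩
  · rintro ⟨τ, rfl⟩
    exact ⟨σ⁻¹ * τ, by ext x; simp [Equiv.Perm.coe_mul, Function.comp]⟩

lemma mem_cellOrbit_symm {r T : ℕ} {i j : Fin T → Fin r} (h : j ∈ cellOrbit r T i) :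
    i ∈ cellOrbit r T j := (cellOrbit_eq_of_mem h) ▸ self_mem_cellOrbit r T i

lemma cellOrbit_card_pos (r T : ℕ) (i : Fin T → Fin r) : 0 < (cellOrbit r T i).card :=
  Finset.card_pos.2 ⟨i, self_mem_cellOrbit r T i⟩

/-- Double counting: averaging `g` over each orbit and summing over all cells gives `∑ g`. -/
lemma sum_orbit_avg {r T : ℕ} (g : (Fin T → Fin r) → ℝ) :
    ∑ i, (∑ j ∈ cellOrbit r T i, g j) / ((cellOrbit r T i).card : ℝ) = ∑ i, g i := by
  classical
  have h1 : ∀ i : Fin T → Fin r,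
      (∑ j ∈ cellOrbit r T i, g j) / ((cellOrbit r T i).card : ℝ)
        = ∑ j : Fin T → Fin r, if j ∈ cellOrbit r T i then g j / ((cellOrbit r T i).card : ℝ) else 0 := by
    intro i
    rw [Finset.sum_div, ← Finset.sum_filter]
    congr 1
    ext j
    simp [cellOrbit]
  calc ∑ i, (∑ j ∈ cellOrbit r T i, g j) / ((cellOrbit r T i).card : ℝ)
      = ∑ i : Fin T → Fin r, ∑ j : Fin T → Fin r,
          if j ∈ cellOrbit r T i then g j / ((cellOrbit r T i).card : ℝ) else 0 := by
        exact Finset.sum_congr rfl fun i _ => h1 i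
    _ = ∑ j : Fin T → Fin r, ∑ i : Fin T → Fin r,
          if j ∈ cellOrbit r T i then g j / ((cellOrbit r T i).card : ℝ) else 0 :=
        Finset.sum_comm
    _ = ∑ j : Fin T → Fin r, ∑ i : Fin T → Fin r,
          if i ∈ cellOrbit r T j then g j / ((cellOrbit r T j).card : ℝ) else 0 := by
        refine Finset.sum_congr rfl fun j _ => Finset.sum_congr rfl fun i _ => ?_
        by_cases h : j ∈ cellOrbit r T i
        · rw [if_pos h, if_pos (mem_cellOrbit_symm h), cellOrbit_eq_of_mem h]
        · rw [if_neg h, if_neg (fun h' => h (mem_cellOrbit_symm h'))]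
    _ = ∑ j : Fin T → Fin r, g j := by
        refine Finset.sum_congr rfl fun j _ => ?_
        rw [Finset.sum_ite_mem, Finset.univ_inter, Finset.sum_const, nsmul_eq_mul,
          mul_div_cancel₀]
        exact Nat.cast_ne_zero.2 (cellOrbit_card_pos r T j).ne'

/-- Jensen for one orbit, with equality case. -/
lemma jensen_orbit {α : Type*} [DecidableEq α] (f : ℝ → ℝ)
    (hconv : StrictConvexOn ℝ (Set.Ioi 0) f)
    (A : Finset α) (hA : A.Nonempty) (x : α → ℝ) (hx : ∀ j ∈ A, 0 < x j) :
    f ((∑ j ∈ A, x j) / A.card) ≤ (∑ j ∈ A, f (x j)) / A.card ∧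
    ((∑ j ∈ A, f (x j)) / A.card ≤ f ((∑ j ∈ A, x j) / A.card) →
      ∀ j ∈ A, ∀ k ∈ A, x j = x k) := by
  have hn : (0:ℝ) < A.card := by exact_mod_cast Finset.card_pos.2 hA
  set w : α → ℝ := fun _ => (A.card : ℝ)⁻¹ with hw
  have h₀ : ∀ j ∈ A, 0 < w j := fun j _ => by positivity
  have h₁ : ∑ j ∈ A, w j = 1 := by
    simp [hw, Finset.sum_const, nsmul_eq_mul, mul_inv_cancel₀ hn.ne']
  have hmem : ∀ j ∈ A, x j ∈ Set.Ioi (0:ℝ) := fun j hj => hx j hj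
  have harg : ∑ j ∈ A, w j • x j = (∑ j ∈ A, x j) / A.card := by
    simp only [hw, smul_eq_mul, ← Finset.mul_sum, div_eq_inv_mul]
  have hval : ∑ j ∈ A, w j • f (x j) = (∑ j ∈ A, f (x j)) / A.card := by
    simp only [hw, smul_eq_mul, ← Finset.mul_sum, div_eq_inv_mul]
  constructor
  · have := hconv.convexOn.map_sum_le (fun j hj => (h₀ j hj).le) h₁ hmem
    rwa [harg, hval] at this
  · intro heq
    refine hconv.eq_of_le_map_sum h₀ h₁ hmem ?_
    rw [hval, harg]; exact heq

/-- Among all positive probability vectors `π` with orbit sums `∑_{j ∈ A(i)} π j = t i`,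
the `f`-divergence `I(π : q)` from the uniform distribution `q` is minimized, uniquely,
at `π^S i = t i / #A(i)`. -/
theorem fdivergence_min_uniform_orbit_constraints
    (r T : ℕ) (hr : 2 ≤ r) (hT : 2 ≤ T)
    (f : ℝ → ℝ) (hconv : StrictConvexOn ℝ (Set.Ioi 0) f)
    (hdiff : ∀ x ∈ Set.Ioi (0 : ℝ), DifferentiableAt ℝ f x) (hf1 : f 1 = 0)
    (q : (Fin T → Fin r) → ℝ) (hq : ∀ i, q i = 1 / (r : ℝ) ^ T)
    (t : (Fin T → Fin r) → ℝ)
    (htinv : ∀ (i : Fin T → Fin r) (σ : Equiv.Perm (Fin T)), t (i ∘ σ) = t i)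
    (htpos : ∀ i, 0 < t i)
    (htsum : ∑ i, t i / ((cellOrbit r T i).card : ℝ) = 1)
    (piS : (Fin T → Fin r) → ℝ)
    (hpiS : ∀ i, piS i = t i / ((cellOrbit r T i).card : ℝ)) :
    -- π^S is a positive probability vector satisfying the orbit-sum constraints
    ((∀ i, 0 < piS i) ∧ (∑ i, piS i = 1) ∧
      (∀ i, ∑ j ∈ cellOrbit r T i, piS j = t i)) ∧
    -- and it is the unique minimizer of I(· : q) over the feasible set
    (∀ π : (Fin T → Fin r) → ℝ, (∀ i, 0 < π i) → (∑ i, π i = 1) →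
      (∀ i, ∑ j ∈ cellOrbit r T i, π j = t i) →
      ((∑ i, q i * f (piS i / q i)) ≤ ∑ i, q i * f (π i / q i)) ∧
      ((∑ i, q i * f (π i / q i)) = (∑ i, q i * f (piS i / q i)) → π = piS)) := by
  classical
  set c : ℝ := (r : ℝ) ^ T with hc_def
  have hrpos : (0:ℝ) < r := by positivity
  have hc : 0 < c := by positivity
  have hcard : ∀ i : Fin T → Fin r, (0:ℝ) < ((cellOrbit r T i).card : ℝ) := fun i => by
    exact_mod_cast cellOrbit_card_pos r T i
  -- t and orbit card are constant on orbits
  have htconst : ∀ i : Fin T → Fin r, ∀ j ∈ cellOrbit r T i, t j = t i := by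
    intro i j hj
    obtain ⟨σ, rfl⟩ := mem_cellOrbit_iff.1 hj
    exact htinv i σ
  have hcconst : ∀ i : Fin T → Fin r, ∀ j ∈ cellOrbit r T i,
      (cellOrbit r T j).card = (cellOrbit r T i).card := by
    intro i j hj; rw [cellOrbit_eq_of_mem hj]
  -- piS is constant on orbits
  have hpiSconst : ∀ i : Fin T → Fin r, ∀ j ∈ cellOrbit r T i, piS j = piS i := by
    intro i j hj
    rw [hpiS j, hpiS i, htconst i j hj, hcconst i j hj]
  have hpiSpos : ∀ i, 0 < piS i := fun i => by
    rw [hpiS i]; exact div_pos (htpos i) (hcard i)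
  have hpiSorb : ∀ i, ∑ j ∈ cellOrbit r T i, piS j = t i := by
    intro i
    rw [Finset.sum_congr rfl (fun j hj => hpiSconst i j hj), Finset.sum_const,
      nsmul_eq_mul, hpiS i, mul_div_cancel₀ _ (hcard i).ne']
  refine ⟨⟨hpiSpos, by simp only [hpiS]; exact htsum, hpiSorb⟩, ?_⟩
  intro π hπpos hπsum hπorb
  -- rewrite the divergences
  have hterm : ∀ (x : (Fin T → Fin r) → ℝ) (i : Fin T → Fin r),
      q i * f (x i / q i) = (1/c) * f (c * x i) := by
    intro x i
    rw [hq i]; rw [div_div_eq_mul_div, div_one, mul_comm (x i) c]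
  have hrw : ∀ x : (Fin T → Fin r) → ℝ,
      ∑ i, q i * f (x i / q i) = (1/c) * ∑ i, f (c * x i) := by
    intro x
    rw [Finset.mul_sum]
    exact Finset.sum_congr rfl fun i _ => hterm x i
  -- Jensen on each orbit
  have hsumorb : ∀ i, ∑ j ∈ cellOrbit r T i, c * π j = c * t i := by
    intro i; rw [← Finset.mul_sum, hπorb i]
  have hargeq : ∀ i, (∑ j ∈ cellOrbit r T i, c * π j) / ((cellOrbit r T i).card : ℝ)
      = c * piS i := by
    intro i; rw [hsumorb i, hpiS i, mul_div_assoc]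
  have key : ∀ i, f (c * piS i)
      ≤ (∑ j ∈ cellOrbit r T i, f (c * π j)) / ((cellOrbit r T i).card : ℝ) := by
    intro i
    have := (jensen_orbit f hconv (cellOrbit r T i) ⟨i, self_mem_cellOrbit r T i⟩
      (fun j => c * π j) (fun j _ => mul_pos hc (hπpos j))).1
    rwa [hargeq i] at this
  have hle : ∑ i, f (c * piS i) ≤ ∑ i, f (c * π i) := by
    rw [← sum_orbit_avg (fun j => f (c * π j))]
    exact Finset.sum_le_sum fun i _ => key i
  constructor
  · rw [hrw piS, hrw π]
    exact mul_le_mul_of_nonneg_left hle (by positivity)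
  · intro heq
    rw [hrw piS, hrw π] at heq
    have hsums : ∑ i, f (c * π i) = ∑ i, f (c * piS i) :=
      mul_left_cancel₀ (by positivity : (1:ℝ)/c ≠ 0) heq
    rw [← sum_orbit_avg (fun j => f (c * π j))] at hsums
    have hterms := (Finset.sum_eq_sum_iff_of_le (fun i _ => key i)).1 hsums.symm
    funext i
    have hi := hterms i (Finset.mem_univ i)
    have hconst := (jensen_orbit f hconv (cellOrbit r T i) ⟨i, self_mem_cellOrbit r T i⟩
      (fun j => c * π j) (fun j _ => mul_pos hc (hπpos j))).2
      (by rw [hargeq i]; exact le_of_eq hi.symm)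
    have hπconst : ∀ j ∈ cellOrbit r T i, π j = π i := by
      intro j hj
      have := hconst j hj i (self_mem_cellOrbit r T i)
      exact mul_left_cancel₀ hc.ne' this
    have : t i = ((cellOrbit r T i).card : ℝ) * π i := by
      rw [← hπorb i, Finset.sum_congr rfl hπconst, Finset.sum_const, nsmul_eq_mul]
    rw [hpiS i, this, mul_div_cancel_left₀ _ (hcard i).ne']
end

section
/- (Lemma 1, T = 3.) Let π^S be a positive probability vector on cells (i,j,k) ∈ (Fin r)³ that is permutation-invariant (π^S(i,j,k) = π^S of any permutation of (i,j,k)), and let μ₁, μ₂, μ₃ ∈ ℝ. Consider the feasible set of positive probability vectors π satisfying (c1): ∑_{(s,t,u) ∈ A((i,j,k))} π(s,t,u) = ∑_{(s,t,u) ∈ A((i,j,k))} π^S(s,t,u) for all cells (i,j,k), and (c2): ∑_i u(i) π(i,+,+) = μ₁, ∑_j u(j) π(+,j,+) = μ₂, ∑_k u(k) π(+,+,k) = μ₃ (where + denotes summation over that coordinate). Suppose π* is a member of the feasible set for which there exist β₁, β₂, β₃ ∈ ℝ and a permutation-invariant function ψ on cells such that F(π*(i,j,k)/π^S(i,j,k))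 = β₁u(i) + β₂u(j) + β₃u(k) + ψ(i,j,k) for all cells. Then I(π* : π^S) ≤ I(π : π^S) for every π in the feasible set; i.e., the minimum of I(π : π^S) over the feasible set is attained at π*. -/
/-!
Writing `d = π - π*`, convexity of `f` gives, cell by cell, the tangent-line bound
`π^S f(π/π^S) ≥ π^S f(π*/π^S) + F(π*/π^S) d`, so it suffices that `∑ F(π*/π^S) d = 0`.
By the assumed form of `F(π*/π^S)` this sum splits into the three moment terms
`βₜ ∑ u d`, which vanish by (c2), and `∑ ψ d`, which vanishes because `ψ` is constant on
each orbit `A(c)` while `d` sums to zero over it by (c1).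
-/

/-- The orbit `A((i,j,k))` of a cell of an `r³` table: all coordinate permutations. -/
def A3 {r : ℕ} (c : Fin r × Fin r × Fin r) : Finset (Fin r × Fin r × Fin r) :=
  {(c.1, c.2.1, c.2.2), (c.1, c.2.2, c.2.1), (c.2.1, c.1, c.2.2),
   (c.2.1, c.2.2, c.1), (c.2.2, c.1, c.2.1), (c.2.2, c.2.1, c.1)}

open Finset

theorem ConvexOn.add_deriv_mul_sub_le {S : Set ℝ} {f : ℝ → ℝ} (hf : ConvexOn ℝ S f)
    {x y : ℝ} (hx : x ∈ S) (hy : y ∈ S) (hfd : DifferentiableAt ℝ f x) :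
    f x + deriv f x * (y - x) ≤ f y := by
  rcases lt_trichotomy x y with hxy | rfl | hxy
  · have h := hf.deriv_le_slope hx hy hxy hfd
    rw [slope_def_field, le_div_iff₀ (sub_pos.2 hxy)] at h
    linarith
  · simp
  · have h := hf.slope_le_deriv hy hx hxy hfd
    rw [slope_def_field, div_le_iff₀ (sub_pos.2 hxy)] at h
    linarith

/-- The `f`-divergence `I(π : q)`. -/
noncomputable def fDivergence {ι : Type*} [Fintype ι] (f : ℝ → ℝ) (q π : ι → ℝ) : ℝ :=
  ∑ i, q i * f (π i / q i)

theorem fDivergence_add_sum_deriv_mul_sub_le {ι : Type*} [Fintype ι] {f : ℝ → ℝ}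
    (hf : ConvexOn ℝ (Set.Ioi 0) f) {q π π' : ι → ℝ} (hq : ∀ i, 0 < q i) (hπ : ∀ i, 0 < π i)
    (hπ' : ∀ i, 0 < π' i) (hfd : ∀ i, DifferentiableAt ℝ f (π i / q i)) :
    fDivergence f q π + ∑ i, deriv f (π i / q i) * (π' i - π i) ≤ fDivergence f q π' := by
  rw [fDivergence, fDivergence, ← sum_add_distrib]
  refine sum_le_sum fun i _ => ?_
  have htangent := hf.add_deriv_mul_sub_le (div_pos (hπ i) (hq i)) (div_pos (hπ' i) (hq i))
    (hfd i)
  have hscale : q i * (π' i / q i - π i / q i) = π' i - π i := by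
    field_simp [(hq i).ne']
  calc q i * f (π i / q i) + deriv f (π i / q i) * (π' i - π i)
      = q i * (f (π i / q i) + deriv f (π i / q i) * (π' i / q i - π i / q i)) := by
        rw [← hscale]; ring
    _ ≤ q i * f (π' i / q i) := mul_le_mul_of_nonneg_left htangent (hq i).le

section Orbits

variable {α : Type*} [Fintype α] {O : α → Finset α}

-- Double counting: `p` lies in `O c` exactly for the `#(O p)` cells `c ∈ O p`.
theorem sum_inv_card_mul_sum_orbit (hself : ∀ c, c ∈ O c)
    (hblock : ∀ c, ∀ p ∈ O c, O p = O c) (h : α → ℝ) :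
    ∑ c, (#(O c) : ℝ)⁻¹ * ∑ p ∈ O c, h p = ∑ c, h c := by
  have hsymm : ∀ c p, p ∈ O c ↔ c ∈ O p := fun c p =>
    ⟨fun hp => hblock c p hp ▸ hself c, fun hc => hblock p c hc ▸ hself p⟩
  simp_rw [mul_sum]
  rw [sum_comm' (t' := univ) (s' := O) fun c p => by simp [hsymm c p]]
  refine sum_congr rfl fun p _ => ?_
  have hcard : (0 : ℝ) < #(O p) := by exact_mod_cast card_pos.2 ⟨p, hself p⟩
  rw [sum_congr rfl fun c hc => by rw [hblock p c hc], sum_const, nsmul_eq_mul]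
  field_simp

theorem sum_mul_eq_zero_of_sum_orbit_eq_zero (hself : ∀ c, c ∈ O c)
    (hblock : ∀ c, ∀ p ∈ O c, O p = O c) {ψ d : α → ℝ} (hψ : ∀ c, ∀ p ∈ O c, ψ p = ψ c)
    (hd : ∀ c, ∑ p ∈ O c, d p = 0) :
    ∑ c, ψ c * d c = 0 := by
  rw [← sum_inv_card_mul_sum_orbit hself hblock]
  refine sum_eq_zero fun c _ => ?_
  rw [sum_congr rfl fun p hp => by rw [hψ c p hp], ← mul_sum, hd c, mul_zero, mul_zero]

end Orbits

theorem mem_A3_self {r : ℕ} (c : Fin r × Fin r × Fin r) : c ∈ A3 c := by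
  simp [A3]

theorem A3_eq_of_mem {r : ℕ} {c p : Fin r × Fin r × Fin r} (h : p ∈ A3 c) : A3 p = A3 c := by
  obtain ⟨a, b, d⟩ := c
  simp only [A3, mem_insert, mem_singleton] at h
  rcases h with rfl | rfl | rfl | rfl | rfl | rfl <;>
    ext q <;> simp only [A3, mem_insert, mem_singleton] <;> tauto

section Moments

variable {α β γ R : Type*} [Fintype α] [Fintype β] [Fintype γ] [NonUnitalNonAssocSemiring R]

theorem sum_fst_mul (u : α → R) (π : α × β × γ → R) :
    ∑ c, u c.1 * π c = ∑ i, u i * ∑ j, ∑ k, π (i, j, k) := by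
  simp only [Fintype.sum_prod_type, mul_sum]

theorem sum_snd_mul (u : β → R) (π : α × β × γ → R) :
    ∑ c, u c.2.1 * π c = ∑ j, u j * ∑ i, ∑ k, π (i, j, k) := by
  simp only [Fintype.sum_prod_type, mul_sum]
  exact sum_comm

theorem sum_thd_mul (u : γ → R) (π : α × β × γ → R) :
    ∑ c, u c.2.2 * π c = ∑ k, u k * ∑ i, ∑ j, π (i, j, k) := by
  simp only [Fintype.sum_prod_type, mul_sum]
  exact (sum_congr rfl fun _ _ => sum_comm).trans sum_comm

end Moments

theorem sum_moments_add_symmetric_mul_eq_zero {r : ℕ} (u : Fin r → ℝ) (β₁ β₂ β₃ : ℝ)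
    {ψ d : Fin r × Fin r × Fin r → ℝ} (hψ : ∀ c, ∀ p ∈ A3 c, ψ p = ψ c)
    (hd : ∀ c, ∑ p ∈ A3 c, d p = 0) (h₁ : ∑ c, u c.1 * d c = 0)
    (h₂ : ∑ c, u c.2.1 * d c = 0) (h₃ : ∑ c, u c.2.2 * d c = 0) :
    ∑ c, (β₁ * u c.1 + β₂ * u c.2.1 + β₃ * u c.2.2 + ψ c) * d c = 0 := by
  have hψd := sum_mul_eq_zero_of_sum_orbit_eq_zero mem_A3_self (fun _ _ => A3_eq_of_mem) hψ hd
  simp only [add_mul, mul_assoc, sum_add_distrib, ← mul_sum, h₁, h₂, h₃, hψd]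
  ring

/-- Lemma 1 (T = 3): if a feasible `π*` (satisfying the orbit-sum restrictions (c1)
and the marginal moment restrictions (c2)) has the form
`F(π*(i,j,k)/π^S(i,j,k)) = β₁ u_i + β₂ u_j + β₃ u_k + ψ_{abc}` for `F = f′` and a
permutation-invariant `ψ`, then `π*` minimizes the `f`-divergence `I(π : π^S)`
over the feasible set. -/
theorem fdivergence_min_T3
    (r : ℕ)
    (u : Fin r → ℝ)
    (f : ℝ → ℝ) (hconv : StrictConvexOn ℝ (Set.Ioi 0) f)
    (hdiff : ∀ x ∈ Set.Ioi (0 : ℝ), DifferentiableAt ℝ f x)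
    (F : ℝ → ℝ) (hF : F = deriv f)
    (piS : Fin r × Fin r × Fin r → ℝ)
    (hpiSpos : ∀ c, 0 < piS c)
    (μ₁ μ₂ μ₃ : ℝ)
    (πstar : Fin r × Fin r × Fin r → ℝ)
    -- π* belongs to the feasible set:
    (hstarpos : ∀ c, 0 < πstar c)
    (hstarc1 : ∀ c, ∑ p ∈ A3 c, πstar p = ∑ p ∈ A3 c, piS p)
    (hstarc2₁ : ∑ i, u i * (∑ j, ∑ k, πstar (i, j, k)) = μ₁)
    (hstarc2₂ : ∑ j, u j * (∑ i, ∑ k, πstar (i, j, k)) = μ₂)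
    (hstarc2₃ : ∑ k, u k * (∑ i, ∑ j, πstar (i, j, k)) = μ₃)
    -- π* has the stated form:
    (β₁ β₂ β₃ : ℝ) (ψ : Fin r × Fin r × Fin r → ℝ)
    (hψ : ∀ c, ∀ p ∈ A3 c, ψ p = ψ c)
    (hform : ∀ i j k, F (πstar (i, j, k) / piS (i, j, k)) =
      β₁ * u i + β₂ * u j + β₃ * u k + ψ (i, j, k)) :
    -- then π* minimizes I(π : π^S) over the feasible set
    ∀ π : Fin r × Fin r × Fin r → ℝ,
      (∀ c, 0 < π c) → (∑ c, π c = 1) →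
      (∀ c, ∑ p ∈ A3 c, π p = ∑ p ∈ A3 c, piS p) →
      (∑ i, u i * (∑ j, ∑ k, π (i, j, k)) = μ₁) →
      (∑ j, u j * (∑ i, ∑ k, π (i, j, k)) = μ₂) →
      (∑ k, u k * (∑ i, ∑ j, π (i, j, k)) = μ₃) →
      (∑ c, piS c * f (πstar c / piS c)) ≤ ∑ c, piS c * f (π c / piS c) := by
  subst hF
  intro π hpos _ hc1 hc2₁ hc2₂ hc2₃
  have horth : ∑ c, deriv f (πstar c / piS c) * (π c - πstar c) = 0 := by
    rw [← sum_moments_add_symmetric_mul_eq_zero u β₁ β₂ β₃ hψ (d := π - πstar)]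
    · exact sum_congr rfl fun c _ => congrArg (· * (π c - πstar c)) (hform c.1 c.2.1 c.2.2)
    · intro c; simp only [Pi.sub_apply, sum_sub_distrib, hc1, hstarc1, sub_self]
    · simp only [Pi.sub_apply, mul_sub, sum_sub_distrib, sum_fst_mul, hc2₁, hstarc2₁, sub_self]
    · simp only [Pi.sub_apply, mul_sub, sum_sub_distrib, sum_snd_mul, hc2₂, hstarc2₂, sub_self]
    · simp only [Pi.sub_apply, mul_sub, sum_sub_distrib, sum_thd_mul, hc2₃, hstarc2₃, sub_self]
  have hmin := fDivergence_add_sum_deriv_mul_sub_le hconv.convexOn hpiSpos hstarpos hpos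
    fun c => hdiff _ (div_pos (hstarpos c) (hpiSpos c))
  rwa [horth, add_zero] at hmin
end

section
/- Let T = 3 and let π̃ be a positive probability vector on cells (i,j,k) ∈ (Fin r)³ that satisfies both the OQS[f] model and the marginal moment equality (ME) model. Then ∑_{i=1}^r ∑_{j=1}^r ∑_{k=1}^r π̃(i,j,k) · ( F(π̃(i,j,k)/π̃^S(i,j,k)) − F(π̃(j,i,k)/π̃^S(j,i,k)) ) = 0. -/
/-- The orbit average `π^S(i,j,k) = (1/#A((i,j,k))) ∑_{(s,t,u) ∈ A((i,j,k))} π(s,t,u)`. -/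
noncomputable def orbitAvg3 {r : ℕ} (π : Fin r × Fin r × Fin r → ℝ)
    (c : Fin r × Fin r × Fin r) : ℝ :=
  (∑ p ∈ A3 c, π p) / ((A3 c).card : ℝ)

/-!
Swapping the first two coordinates leaves the symmetric part `ψ` of the OQS[f] model unchanged,
so `F(π̃/π̃^S)(i,j,k) − F(π̃/π̃^S)(j,i,k) = (β₁ − β₂)(u i − u j)`. Weighting by `π̃(i,j,k)` and
summing gives `(β₁ − β₂)` times the difference of the first two marginal moments of `u`,
which vanishes under ME.
-/

open Finset

theorem swap_mem_A3 {r : ℕ} (i j k : Fin r) : (j, i, k) ∈ A3 (i, j, k) := by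
  simp [A3]

theorem sub_swap_eq_of_eq_linear_add_symm {ι R : Type*} [CommRing R]
    (G : ι × ι × ι → R) (u : ι → R) (β₁ β₂ β₃ : R) (ψ : ι × ι × ι → R)
    (hψ : ∀ i j k, ψ (j, i, k) = ψ (i, j, k))
    (hG : ∀ i j k, G (i, j, k) = β₁ * u i + β₂ * u j + β₃ * u k + ψ (i, j, k))
    (i j k : ι) :
    G (i, j, k) - G (j, i, k) = (β₁ - β₂) * (u i - u j) := by
  rw [hG, hG, hψ]
  ring

theorem sum_mul_sub_eq_moment_sub_moment {ι κ R : Type*} [Fintype ι] [Fintype κ]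
    [CommRing R] (w : ι × ι × κ → R) (u : ι → R) :
    ∑ i, ∑ j, ∑ k, w (i, j, k) * (u i - u j) =
      ∑ i, u i * ∑ j, ∑ k, w (i, j, k) - ∑ j, u j * ∑ i, ∑ k, w (i, j, k) := by
  simp only [mul_sub, sum_sub_distrib, mul_sum]
  congr 1
  · simp only [mul_comm]
  · rw [sum_comm]
    simp only [mul_comm]

theorem OQSf_ME_weighted_sum_zero
    (r : ℕ)
    (u : Fin r → ℝ)
    (F : ℝ → ℝ)
    (π : Fin r × Fin r × Fin r → ℝ)
    -- π̃ satisfies the OQS[f] model: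
    (hOQS : ∃ (β₁ β₂ β₃ : ℝ) (ψ : Fin r × Fin r × Fin r → ℝ),
      (∀ c, ∀ p ∈ A3 c, ψ p = ψ c) ∧
      ∀ i j k : Fin r, F (π (i, j, k) / orbitAvg3 π (i, j, k)) =
        β₁ * u i + β₂ * u j + β₃ * u k + ψ (i, j, k))
    -- π̃ satisfies the ME model:
    (hME₁ : ∑ i, u i * (∑ j, ∑ k, π (i, j, k)) = ∑ j, u j * (∑ i, ∑ k, π (i, j, k))) :
    ∑ i, ∑ j, ∑ k, π (i, j, k) *
      (F (π (i, j, k) / orbitAvg3 π (i, j, k)) -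
       F (π (j, i, k) / orbitAvg3 π (j, i, k))) = 0 := by
  obtain ⟨β₁, β₂, β₃, ψ, hψ, hmodel⟩ := hOQS
  have hdiff := sub_swap_eq_of_eq_linear_add_symm (fun c => F (π c / orbitAvg3 π c)) u
    β₁ β₂ β₃ ψ (fun i j k => hψ _ _ (swap_mem_A3 i j k)) hmodel
  calc ∑ i, ∑ j, ∑ k, π (i, j, k) *
        (F (π (i, j, k) / orbitAvg3 π (i, j, k)) - F (π (j, i, k) / orbitAvg3 π (j, i, k)))
      = (β₁ - β₂) * ∑ i, ∑ j, ∑ k, π (i, j, k) * (u i - u j) := by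
        simp only [hdiff, mul_sum, mul_left_comm]
    _ = 0 := by rw [sum_mul_sub_eq_moment_sub_moment, hME₁, sub_self, mul_zero]
end

section
/- A positive probability vector π on cells i : Fin T → Fin r satisfies the OQS[f] model with f(x) = x log x if and only if there exist β : Fin T → ℝ and a permutation-invariant function λ on cells (λ(i∘σ) = λ(i)) such that log π(i) = ∑_{t=1}^T β_t u(i_t) + λ(i) for every cell i; i.e., OQS[f] with f(x) = x log x is equivalent to the ordinal quasi-symmetry (OQS) model. -/
/-- The orbit average `π^S(i) = (1/#A(i)) ∑_{j ∈ A(i)} π(j)`. -/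
noncomputable def orbitAvg (r T : ℕ) (π : (Fin T → Fin r) → ℝ) (i : Fin T → Fin r) : ℝ :=
  (∑ j ∈ cellOrbit r T i, π j) / ((cellOrbit r T i).card : ℝ)

lemma cellOrbit_comp (r T : ℕ) (i : Fin T → Fin r) (σ : Equiv.Perm (Fin T)) :
    cellOrbit r T (i ∘ σ) = cellOrbit r T i := by
  ext j
  simp only [cellOrbit, Finset.mem_filter, Finset.mem_univ, true_and]
  constructor
  · rintro ⟨τ, rfl⟩
    exact ⟨σ * τ, by ext x; rfl⟩
  · rintro ⟨τ, rfl⟩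
    exact ⟨σ⁻¹ * τ, by ext x; simp⟩

lemma orbitAvg_comp (r T : ℕ) (π : (Fin T → Fin r) → ℝ) (i : Fin T → Fin r)
    (σ : Equiv.Perm (Fin T)) : orbitAvg r T π (i ∘ σ) = orbitAvg r T π i := by
  unfold orbitAvg
  rw [cellOrbit_comp]

lemma orbitAvg_pos (r T : ℕ) (π : (Fin T → Fin r) → ℝ) (hpos : ∀ i, 0 < π i)
    (i : Fin T → Fin r) : 0 < orbitAvg r T π i := by
  have hne : (cellOrbit r T i).Nonempty := ⟨i, self_mem_cellOrbit r T i⟩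
  apply div_pos
  · exact Finset.sum_pos (fun j _ => hpos j) hne
  · exact_mod_cast Finset.card_pos.mpr hne

lemma deriv_xlogx (y : ℝ) (hy : y ≠ 0) :
    deriv (fun x : ℝ => x * Real.log x) y = Real.log y + 1 :=
  (Real.hasDerivAt_mul_log hy).deriv

/-- The OQS[f] model with `f(x) = x log x` is exactly the ordinal quasi-symmetry (OQS)
log-linear model `log π(i) = ∑_t β_t u(i_t) + λ(i)` with permutation-invariant `λ`. -/
theorem OQSf_xlogx_iff_OQS
    (r T : ℕ) (hr : 2 ≤ r) (hT : 2 ≤ T)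
    (u : Fin r → ℝ) (humono : Monotone u)
    (hune : u ⟨0, by omega⟩ < u ⟨r - 1, by omega⟩)
    (π : (Fin T → Fin r) → ℝ) (hpos : ∀ i, 0 < π i) (hsum : ∑ i, π i = 1) :
    -- the OQS[f] model with f(x) = x log x (so F = f′)
    (∃ (β : Fin T → ℝ) (ψ : (Fin T → Fin r) → ℝ),
      (∀ (i : Fin T → Fin r) (σ : Equiv.Perm (Fin T)), ψ (i ∘ σ) = ψ i) ∧
      ∀ i : Fin T → Fin r,
        deriv (fun x : ℝ => x * Real.log x) (π i / orbitAvg r T π i) =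
          (∑ t, β t * u (i t)) + ψ i) ↔
    -- the OQS model
    (∃ (β : Fin T → ℝ) (lam : (Fin T → Fin r) → ℝ),
      (∀ (i : Fin T → Fin r) (σ : Equiv.Perm (Fin T)), lam (i ∘ σ) = lam i) ∧
      ∀ i : Fin T → Fin r,
        Real.log (π i) = (∑ t, β t * u (i t)) + lam i) := by
  have havg := orbitAvg_pos r T π hpos
  have hkey : ∀ i : Fin T → Fin r,
      deriv (fun x : ℝ => x * Real.log x) (π i / orbitAvg r T π i) =
        Real.log (π i) - Real.log (orbitAvg r T π i) + 1 := by
    intro i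
    rw [deriv_xlogx _ (div_ne_zero (hpos i).ne' (havg i).ne'),
      Real.log_div (hpos i).ne' (havg i).ne']
  constructor
  · rintro ⟨β, ψ, hψ, h⟩
    refine ⟨β, fun i => ψ i + Real.log (orbitAvg r T π i) - 1, ?_, ?_⟩
    · intro i σ; dsimp only; rw [hψ, orbitAvg_comp]
    · intro i
      have := h i
      rw [hkey i] at this
      dsimp only
      linarith
  · rintro ⟨β, lam, hlam, h⟩
    refine ⟨β, fun i => lam i - Real.log (orbitAvg r T π i) + 1, ?_, ?_⟩
    · intro i σ; dsimp only; rw [hlam, orbitAvg_comp]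
    · intro i
      rw [hkey i, h i]
      dsimp only
      ring
end
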